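/- Double estimate for the δ-optimal recovery error: for any δ > 0 with δ < 1/ξ_0 (so that N_δ ≥ 1), μ_{N_δ}/ξ_{N_δ} ≤ R_δ(A,W)_H ≤ R_{N_δ,δ}(A,W)_H < ( μ_{N_δ−1}²/ξ_{N_δ−1}² + sup_{k ≥ N_δ} μ_k²/ξ_k² )^{1/2}. -/

import Mathlib

noncomputable section

open Filter
open scoped ENNReal RealInnerProductSpace

variable {H : Type*} [NormedAddCommGroup H] [InnerProductSpace ℝ H] [CompleteSpace H]

/-- `f` belongs to the source set `W`. -/
def MemW (w : ℕ → H) (ξ : ℕ → ℝ) (f : H) : Prop :=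
  Summable fun k => ξ k ^ 2 * ⟪f, w k⟫ ^ 2

/-- The `W`-norm of `f`. -/
def normW (w : ℕ → H) (ξ : ℕ → ℝ) (f : H) : ℝ :=
  Real.sqrt (∑' k, ξ k ^ 2 * ⟪f, w k⟫ ^ 2)

/-- The unbounded operator `A`, defined spectrally by `A f = ∑ μ_k ⟨f, w_k⟩ w_k`. -/
def opA (w : ℕ → H) (μ : ℕ → ℝ) (f : H) : H :=
  ∑' k, (μ k * ⟪f, w k⟫) • w k

/-- The worst case recovery error `ε_δ(A, W, G, Ψ)_H` of the pair `(G, Ψ)`. -/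
def recErr (w : ℕ → H) (μ ξ : ℕ → ℝ) (δ : ℝ) {N : ℕ}
    (G : H → Fin N → ℝ) (Ψ : (Fin N → ℝ) → H) : ℝ≥0∞ :=
  ⨆ (f : H) (_ : MemW w ξ f ∧ normW w ξ f ≤ 1) (fδ : H) (_ : ‖f - fδ‖ ≤ δ),
    ENNReal.ofReal ‖opA w μ f - Ψ (G fδ)‖

/-- The `(N,δ)`-optimal recovery error `R_{N,δ}(A, W)_H`. -/
def Ropt (w : ℕ → H) (μ ξ : ℕ → ℝ) (δ : ℝ) (N : ℕ) : ℝ≥0∞ :=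
  ⨅ (G : H → Fin N → ℝ) (_ : Continuous G) (Ψ : (Fin N → ℝ) → H),
    recErr w μ ξ δ G Ψ

/-- The `δ`-optimal recovery error `R_δ(A, W)_H`. -/
def RoptAll (w : ℕ → H) (μ ξ : ℕ → ℝ) (δ : ℝ) : ℝ≥0∞ :=
  ⨅ N : ℕ, Ropt w μ ξ δ N

/-- The critical index `N_δ = min {N ≥ 0 : ξ_N ≥ 1/δ}`. -/
def Ncrit (ξ : ℕ → ℝ) (δ : ℝ) : ℕ := sInf {N : ℕ | 1 / δ ≤ ξ N}

/-- The information map of the truncation method: the first `N` Fourier coefficients. -/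
def Gtrunc (w : ℕ → H) (N : ℕ) (f : H) : Fin N → ℝ := fun k => ⟪f, w k⟫

/-- The recovery algorithm of the truncation method. -/
def Psitrunc (w : ℕ → H) (μ : ℕ → ℝ) (N : ℕ) (x : Fin N → ℝ) : H :=
  ∑ k : Fin N, (μ k * x k) • w k

/-! The lower bound is the central-symmetry argument: `±ξ_N⁻¹ w_N` are both admissible and both
within `δ` of `0`, so any method returns the same answer for them and errs on one of them by at
least `‖A(ξ_N⁻¹ w_N)‖ = μ_N / ξ_N`. The upper bound comes from truncation, which recovers the first
`N` Fourier coefficients of `Af` from those of `f^δ`: by orthogonality and Bessel's inequality the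
head contributes at most `μ_{N-1}² δ²` and the tail at most `sup_{k ≥ N} μ_k² / ξ_k²`, and the
minimality of `N` gives `δ ξ_{N-1} < 1`, which makes the bound strict. -/

theorem sq_mul_le_of_div_sq_le {μ ξ c S : ℝ} (hξ : ξ ≠ 0) (h : (μ / ξ) ^ 2 ≤ S) :
    (μ * c) ^ 2 ≤ S * (ξ ^ 2 * c ^ 2) :=
  calc (μ * c) ^ 2 = (μ / ξ) ^ 2 * (ξ ^ 2 * c ^ 2) := by field_simp
    _ ≤ S * (ξ ^ 2 * c ^ 2) := by gcongr

theorem summable_sq_mul_of_div_sq_le {μ ξ c : ℕ → ℝ} {S : ℝ} {N : ℕ} (hξ : ∀ k, 0 < ξ k)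
    (hS : ∀ k, N ≤ k → (μ k / ξ k) ^ 2 ≤ S) (hc : Summable fun k => ξ k ^ 2 * c k ^ 2) :
    Summable fun k => (μ k * c k) ^ 2 :=
  (hc.mul_left S).of_norm_bounded_eventually_nat <| eventually_atTop.2 ⟨N, fun k hk => by
    rw [Real.norm_of_nonneg (sq_nonneg _)]
    exact sq_mul_le_of_div_sq_le (hξ k).ne' (hS k hk)⟩

theorem le_ciSup_nat_add {u : ℕ → ℝ} (hu : BddAbove (Set.range u)) {N k : ℕ} (hk : N ≤ k) :
    u k ≤ ⨆ j, u (N + j) := by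
  obtain ⟨j, rfl⟩ := Nat.exists_eq_add_of_le hk
  exact le_ciSup (hu.mono fun _ ⟨j, hj⟩ => ⟨N + j, hj⟩) j

theorem hasSum_ite_lt {M : Type*} [AddCommMonoid M] [TopologicalSpace M] (g : ℕ → M) (N : ℕ) :
    HasSum (fun k => if k < N then g k else 0) (∑ k ∈ Finset.range N, g k) := by
  have h : HasSum (fun k => if k < N then g k else 0)
      (∑ k ∈ Finset.range N, if k < N then g k else 0) :=
    hasSum_sum_of_ne_finset_zero fun k hk => if_neg (mt Finset.mem_range.2 hk)
  rwa [Finset.sum_congr rfl fun k hk => if_pos (Finset.mem_range.1 hk)] at h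

theorem norm_le_max_norm_sub_norm_neg_sub {E : Type*} [NormedAddCommGroup E]
    [NormedSpace ℝ E] (x h : E) : ‖x‖ ≤ max ‖x - h‖ ‖-x - h‖ := by
  have htwo : (x - h) - (-x - h) = (2 : ℝ) • x := by module
  have := norm_sub_le (x - h) (-x - h)
  rw [htwo, norm_smul, Real.norm_two] at this
  linarith [le_max_left ‖x - h‖ ‖-x - h‖, le_max_right ‖x - h‖ ‖-x - h‖]

theorem sqrt_mul_sq_add_lt_sqrt_div_sq_add {μ ξ δ S : ℝ} (hμ : 0 < μ) (hδ : 0 ≤ δ)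
    (hδξ : δ < 1 / ξ) (hS : 0 ≤ S) :
    √(μ ^ 2 * δ ^ 2 + S) < √((μ / ξ) ^ 2 + S) := by
  have : μ ^ 2 * δ ^ 2 < (μ / ξ) ^ 2 :=
    calc μ ^ 2 * δ ^ 2 < μ ^ 2 * (1 / ξ) ^ 2 := by gcongr
      _ = (μ / ξ) ^ 2 := by ring
  exact Real.sqrt_lt_sqrt (by positivity) (by linarith)

section InnerProductSpace

variable {E : Type*} [NormedAddCommGroup E] [InnerProductSpace ℝ E]

section Orthonormal

variable {ι : Type*} {v : ι → E}

theorem Orthonormal.norm_sum_smul_sq (hv : Orthonormal ℝ v) (c : ι → ℝ) (s : Finset ι) :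
    ‖∑ i ∈ s, c i • v i‖ ^ 2 = ∑ i ∈ s, c i ^ 2 := by
  rw [← real_inner_self_eq_norm_sq, hv.inner_sum]
  simp [sq]

theorem Orthonormal.hasSum_sq_of_hasSum_smul (hv : Orthonormal ℝ v) {c : ι → ℝ} {x : E}
    (hx : HasSum (fun i => c i • v i) x) : HasSum (fun i => c i ^ 2) (‖x‖ ^ 2) := by
  have hcont : Continuous fun y : E => ‖y‖ ^ 2 := by fun_prop
  have := (hcont.tendsto x).comp hx
  simpa only [HasSum, Function.comp_def, hv.norm_sum_smul_sq] using this

theorem Orthonormal.summable_smul_of_summable_sq [CompleteSpace E] (hv : Orthonormal ℝ v)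
    {c : ι → ℝ} (hc : Summable fun i => c i ^ 2) : Summable fun i => c i • v i := by
  simpa using (hv.orthogonalFamily.summable_iff_norm_sq_summable c).2 (by simpa using hc)

theorem Orthonormal.inner_smul_left_eq_ite (hv : Orthonormal ℝ v) [DecidableEq ι] (t : ℝ)
    (n k : ι) : ⟪t • v n, v k⟫ = if k = n then t else 0 := by
  rw [real_inner_smul_left, orthonormal_iff_ite.1 hv n k]
  split_ifs <;> simp_all [eq_comm]

end Orthonormal

section Recovery

variable {w : ℕ → E} {μ ξ : ℕ → ℝ} {δ : ℝ} {N : ℕ}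

theorem hasSum_sq_mul_inner_smul (hw : Orthonormal ℝ w) (t : ℝ) (n : ℕ) :
    HasSum (fun k => ξ k ^ 2 * ⟪t • w n, w k⟫ ^ 2) ((t * ξ n) ^ 2) := by
  convert hasSum_ite_eq n ((t * ξ n) ^ 2) using 1
  funext k
  rw [hw.inner_smul_left_eq_ite]
  split_ifs with hk
  · subst hk; ring
  · ring

theorem memW_smul (hw : Orthonormal ℝ w) (t : ℝ) (n : ℕ) : MemW w ξ (t • w n) :=
  (hasSum_sq_mul_inner_smul hw t n).summable

theorem normW_smul (hw : Orthonormal ℝ w) (t : ℝ) (n : ℕ) : normW w ξ (t • w n) = |t * ξ n| := by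
  rw [normW, (hasSum_sq_mul_inner_smul hw t n).tsum_eq, Real.sqrt_sq_eq_abs]

theorem opA_smul (hw : Orthonormal ℝ w) (t : ℝ) (n : ℕ) :
    opA w μ (t • w n) = (μ n * t) • w n := by
  rw [opA, tsum_eq_single n fun k hk => by simp [hw.inner_smul_left_eq_ite, hk]]
  simp [hw.inner_smul_left_eq_ite]

theorem memW_neg {f : E} (hf : MemW w ξ f) : MemW w ξ (-f) := by
  simpa [MemW, inner_neg_left] using hf

theorem normW_neg (f : E) : normW w ξ (-f) = normW w ξ f := by
  simp [normW, inner_neg_left]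

theorem opA_neg (f : E) : opA w μ (-f) = -opA w μ f := by
  simp only [opA, inner_neg_left, mul_neg, neg_smul, tsum_neg]

variable {G : E → Fin N → ℝ} {Ψ : (Fin N → ℝ) → E}

theorem le_recErr {f fδ : E} (hf : MemW w ξ f ∧ normW w ξ f ≤ 1) (hfδ : ‖f - fδ‖ ≤ δ) :
    ENNReal.ofReal ‖opA w μ f - Ψ (G fδ)‖ ≤ recErr w μ ξ δ G Ψ :=
  le_iSup₂_of_le f hf (le_iSup₂_of_le fδ hfδ le_rfl)

theorem ofReal_norm_opA_le_recErr {f : E} (hf : MemW w ξ f) (hf1 : normW w ξ f ≤ 1)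
    (hfδ : ‖f‖ ≤ δ) : ENNReal.ofReal ‖opA w μ f‖ ≤ recErr w μ ξ δ G Ψ := by
  have hpos : ENNReal.ofReal ‖opA w μ f - Ψ (G 0)‖ ≤ recErr w μ ξ δ G Ψ :=
    le_recErr ⟨hf, hf1⟩ (by simpa using hfδ)
  have hneg : ENNReal.ofReal ‖-opA w μ f - Ψ (G 0)‖ ≤ recErr w μ ξ δ G Ψ := by
    rw [← opA_neg]
    exact le_recErr ⟨memW_neg hf, (normW_neg f).trans_le hf1⟩ (by simpa using hfδ)
  calc ENNReal.ofReal ‖opA w μ f‖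
      ≤ ENNReal.ofReal (max ‖opA w μ f - Ψ (G 0)‖ ‖-opA w μ f - Ψ (G 0)‖) :=
        ENNReal.ofReal_le_ofReal (norm_le_max_norm_sub_norm_neg_sub _ _)
    _ ≤ recErr w μ ξ δ G Ψ := by rw [ENNReal.ofReal_max]; exact max_le hpos hneg

theorem ofReal_div_le_recErr (hw : Orthonormal ℝ w) {n : ℕ} (hξ : 0 < ξ n) (hδ : (ξ n)⁻¹ ≤ δ) :
    ENNReal.ofReal (μ n / ξ n) ≤ recErr w μ ξ δ G Ψ := by
  have hnorm : ‖(ξ n)⁻¹ • w n‖ = (ξ n)⁻¹ := by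
    rw [norm_smul, hw.1 n, mul_one, Real.norm_of_nonneg (inv_nonneg.2 hξ.le)]
  refine le_trans (ENNReal.ofReal_le_ofReal ?_)
    (ofReal_norm_opA_le_recErr (memW_smul hw _ n) ?_ (hnorm.trans_le hδ))
  · rw [opA_smul hw, norm_smul, hw.1 n, mul_one, div_eq_mul_inv]
    exact Real.le_norm_self _
  · rw [normW_smul hw, inv_mul_cancel₀ hξ.ne', abs_one]

theorem Ropt_le_recErr (hG : Continuous G) (Ψ : (Fin N → ℝ) → E) :
    Ropt w μ ξ δ N ≤ recErr w μ ξ δ G Ψ :=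
  iInf₂_le_of_le G hG (iInf_le _ Ψ)

theorem ofReal_div_le_RoptAll (hw : Orthonormal ℝ w) {n : ℕ} (hξ : 0 < ξ n)
    (hδ : (ξ n)⁻¹ ≤ δ) : ENNReal.ofReal (μ n / ξ n) ≤ RoptAll w μ ξ δ :=
  le_iInf fun _ => le_iInf₂ fun _ _ => le_iInf fun _ => ofReal_div_le_recErr hw hξ hδ

theorem continuous_Gtrunc : Continuous (Gtrunc w N) := by
  unfold Gtrunc
  fun_prop

theorem hasSum_Psitrunc_Gtrunc (g : E) :
    HasSum (fun k => if k < N then (μ k * ⟪g, w k⟫) • w k else 0)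
      (Psitrunc w μ N (Gtrunc w N g)) := by
  simp only [Psitrunc, Gtrunc]
  rw [Fin.sum_univ_eq_sum_range (fun k => (μ k * ⟪g, w k⟫) • w k)]
  exact hasSum_ite_lt _ N

theorem hasSum_opA [CompleteSpace E] (hw : Orthonormal ℝ w) {f : E}
    (hf : Summable fun k => (μ k * ⟪f, w k⟫) ^ 2) :
    HasSum (fun k => (μ k * ⟪f, w k⟫) • w k) (opA w μ f) :=
  (hw.summable_smul_of_summable_sq hf).hasSum

theorem hasSum_opA_sub_Psitrunc [CompleteSpace E] (hw : Orthonormal ℝ w) {f : E}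
    (hf : Summable fun k => (μ k * ⟪f, w k⟫) ^ 2) (fδ : E) :
    HasSum (fun k => (if k < N then μ k * ⟪f - fδ, w k⟫ else μ k * ⟪f, w k⟫) • w k)
      (opA w μ f - Psitrunc w μ N (Gtrunc w N fδ)) := by
  convert (hasSum_opA hw hf).sub (hasSum_Psitrunc_Gtrunc (w := w) (μ := μ) (N := N) fδ) using 1
  funext k
  split_ifs <;> simp [inner_sub_left, mul_sub, sub_smul]

section Truncation

variable {S : ℝ} (hμ : Monotone μ) (hμ0 : 0 ≤ μ 0) (hξ : ∀ k, 0 < ξ k)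
  (hS : ∀ k, N ≤ k → (μ k / ξ k) ^ 2 ≤ S)
include hμ hμ0 hξ hS

theorem sq_ite_lt_le_add (e c : ℕ → ℝ) (k : ℕ) :
    (if k < N then μ k * e k else μ k * c k) ^ 2 ≤
      μ (N - 1) ^ 2 * (if k < N then e k ^ 2 else 0) + S * (ξ k ^ 2 * c k ^ 2) := by
  split_ifs with hk
  · have hμk : μ k ^ 2 ≤ μ (N - 1) ^ 2 :=
      pow_le_pow_left₀ (hμ0.trans (hμ k.zero_le)) (hμ (by omega)) 2
    have hS0 : 0 ≤ S := (sq_nonneg _).trans (hS N le_rfl)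
    nlinarith [sq_nonneg (e k), sq_nonneg (ξ k * c k)]
  · simpa using sq_mul_le_of_div_sq_le (hξ k).ne' (hS k (not_lt.1 hk))

theorem norm_opA_sub_Psitrunc_sq_le [CompleteSpace E] (hw : Orthonormal ℝ w) {f fδ : E}
    (hf : MemW w ξ f) (hf1 : normW w ξ f ≤ 1) (hfδ : ‖f - fδ‖ ≤ δ) :
    ‖opA w μ f - Psitrunc w μ N (Gtrunc w N fδ)‖ ^ 2 ≤ μ (N - 1) ^ 2 * δ ^ 2 + S := by
  have hcoeff := hw.hasSum_sq_of_hasSum_smul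
    (hasSum_opA_sub_Psitrunc (N := N) hw (summable_sq_mul_of_div_sq_le hξ hS hf) fδ)
  have hmajorant := ((hasSum_ite_lt (fun k => ⟪f - fδ, w k⟫ ^ 2) N).mul_left (μ (N - 1) ^ 2)).add
    ((show Summable fun k => ξ k ^ 2 * ⟪f, w k⟫ ^ 2 from hf).hasSum.mul_left S)
  have hbessel : ∑ k ∈ Finset.range N, ⟪f - fδ, w k⟫ ^ 2 ≤ δ ^ 2 := by
    have := hw.sum_inner_products_le (s := Finset.range N) (f - fδ)
    simp only [Real.norm_eq_abs, sq_abs, real_inner_comm (f - fδ)] at this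
    exact this.trans (pow_le_pow_left₀ (norm_nonneg _) hfδ 2)
  have hW : ∑' k, ξ k ^ 2 * ⟪f, w k⟫ ^ 2 ≤ 1 := Real.sqrt_le_one.1 hf1
  have hS0 : 0 ≤ S := (sq_nonneg _).trans (hS N le_rfl)
  calc ‖opA w μ f - Psitrunc w μ N (Gtrunc w N fδ)‖ ^ 2
      ≤ μ (N - 1) ^ 2 * ∑ k ∈ Finset.range N, ⟪f - fδ, w k⟫ ^ 2 +
          S * ∑' k, ξ k ^ 2 * ⟪f, w k⟫ ^ 2 :=
        hasSum_le (fun k => sq_ite_lt_le_add hμ hμ0 hξ hS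
          (fun k => ⟪f - fδ, w k⟫) (fun k => ⟪f, w k⟫) k) hcoeff hmajorant
    _ ≤ μ (N - 1) ^ 2 * δ ^ 2 + S * 1 := by gcongr
    _ = μ (N - 1) ^ 2 * δ ^ 2 + S := by rw [mul_one]

theorem recErr_trunc_le [CompleteSpace E] (hw : Orthonormal ℝ w) :
    recErr w μ ξ δ (Gtrunc w N) (Psitrunc w μ N) ≤
      ENNReal.ofReal √(μ (N - 1) ^ 2 * δ ^ 2 + S) :=
  iSup₂_le fun _ hf => iSup₂_le fun _ hfδ => ENNReal.ofReal_le_ofReal <|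
    (abs_norm _).symm.trans_le <| Real.abs_le_sqrt <|
      norm_opA_sub_Psitrunc_sq_le hμ hμ0 hξ hS hw hf.1 hf.2 hfδ

end Truncation

end Recovery

end InnerProductSpace

theorem Ncrit_mem {ξ : ℕ → ℝ} {δ : ℝ} (h : ∃ n, 1 / δ ≤ ξ n) : 1 / δ ≤ ξ (Ncrit ξ δ) :=
  Nat.sInf_mem h

theorem lt_of_lt_Ncrit {ξ : ℕ → ℝ} {δ : ℝ} {k : ℕ} (hk : k < Ncrit ξ δ) : ξ k < 1 / δ :=
  not_le.1 (Nat.notMem_of_lt_sInf hk)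

theorem stmt4_general
    (w : ℕ → H) (hw_on : Orthonormal ℝ w)
    (μ ξ : ℕ → ℝ)
    (hμ0 : 0 < μ 0) (hμmono : Monotone μ)
    (hξ0 : 0 < ξ 0) (hξmono : Monotone ξ) (hξtop : Tendsto ξ atTop atTop)
    (hratio : Tendsto (fun k => μ k / ξ k) atTop (nhds 0)) :
    ∀ δ : ℝ, 0 < δ → δ < 1 / ξ 0 →
      ENNReal.ofReal (μ (Ncrit ξ δ) / ξ (Ncrit ξ δ)) ≤ RoptAll w μ ξ δ ∧
        RoptAll w μ ξ δ ≤ Ropt w μ ξ δ (Ncrit ξ δ) ∧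
          Ropt w μ ξ δ (Ncrit ξ δ) <
            ENNReal.ofReal (Real.sqrt
              ((μ (Ncrit ξ δ - 1) / ξ (Ncrit ξ δ - 1)) ^ 2 +
                ⨆ j : ℕ, (μ (Ncrit ξ δ + j) / ξ (Ncrit ξ δ + j)) ^ 2)) := by
  intro δ hδ hδξ
  have hξ : ∀ k, 0 < ξ k := fun k => hξ0.trans_le (hξmono k.zero_le)
  have hN : 1 / δ ≤ ξ (Ncrit ξ δ) := Ncrit_mem (hξtop.eventually_ge_atTop _).exists
  have hNpos : 0 < Ncrit ξ δ := Nat.pos_of_ne_zero fun h0 =>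
    (h0 ▸ hN).not_gt ((lt_one_div hδ hξ0).1 hδξ)
  set N := Ncrit ξ δ
  have hS : ∀ k, N ≤ k → (μ k / ξ k) ^ 2 ≤ ⨆ j, (μ (N + j) / ξ (N + j)) ^ 2 :=
    fun k => le_ciSup_nat_add (hratio.pow 2).bddAbove_range
  refine ⟨ofReal_div_le_RoptAll hw_on (hξ N) (inv_le_of_inv_le₀ hδ (by simpa using hN)),
    iInf_le _ N, ?_⟩
  calc Ropt w μ ξ δ N ≤ recErr w μ ξ δ (Gtrunc w N) (Psitrunc w μ N) :=
        Ropt_le_recErr continuous_Gtrunc _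
    _ ≤ ENNReal.ofReal √(μ (N - 1) ^ 2 * δ ^ 2 + ⨆ j, (μ (N + j) / ξ (N + j)) ^ 2) :=
        recErr_trunc_le hμmono hμ0.le hξ hS hw_on
    _ < _ := (ENNReal.ofReal_lt_ofReal_iff_of_nonneg (Real.sqrt_nonneg _)).2 <|
        sqrt_mul_sq_add_lt_sqrt_div_sq_add (hμ0.trans_le (hμmono (N - 1).zero_le)) hδ.le
          ((lt_one_div (hξ _) hδ).1 (lt_of_lt_Ncrit (Nat.sub_lt hNpos one_pos)))
          ((sq_nonneg _).trans (hS N le_rfl))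

/-- double estimate for the `δ`-optimal recovery error. -/
theorem stmt4
    (w : ℕ → H) (hw_on : Orthonormal ℝ w)
    (hw_dense : Dense (Submodule.span ℝ (Set.range w) : Set H))
    (μ ξ : ℕ → ℝ)
    (hμ0 : 0 < μ 0) (hμmono : Monotone μ) (hμtop : Tendsto μ atTop atTop)
    (hξ0 : 0 < ξ 0) (hξmono : Monotone ξ) (hξtop : Tendsto ξ atTop atTop)
    (hratio : Tendsto (fun k => μ k / ξ k) atTop (nhds 0)) :
    ∀ δ : ℝ, 0 < δ → δ < 1 / ξ 0 →
      ENNReal.ofReal (μ (Ncrit ξ δ) / ξ (Ncrit ξ δ)) ≤ RoptAll w μ ξ δ ∧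
        RoptAll w μ ξ δ ≤ Ropt w μ ξ δ (Ncrit ξ δ) ∧
          Ropt w μ ξ δ (Ncrit ξ δ) <
            ENNReal.ofReal (Real.sqrt
              ((μ (Ncrit ξ δ - 1) / ξ (Ncrit ξ δ - 1)) ^ 2 +
                ⨆ j : ℕ, (μ (Ncrit ξ δ + j) / ξ (Ncrit ξ δ + j)) ^ 2)) :=
  stmt4_general w hw_on μ ξ hμ0 hμmono hξ0 hξmono hξtop hratio
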